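/- arXiv:2306.03775 — 3 statements merged into one kernel-verified Lean document; each statement's English description precedes it below -/
import Mathlib

section
/- Let s : I → ℝ be injective on a finite set I, g : I → Bool, α > 0, and s̃(i) = s(i) + α·𝟙[g(i)]. Suppose every pair (i_g, i_{¬g}) with g(i_g) = true, g(i_{¬g}) = false, and 0 ≤ s(i_{¬g}) − s(i_g) ≤ α satisfies v(i_g) > v(i_{¬g}), where v : I → ℝ are item values. Then for any strictly decreasing position weights w, the value of the ranking induced by s̃ strictly exceeds the value of the ranking induced by s, provided at least one such misranked pair exists. (Deterministic version of the matched pair calibration marginal outcome test.) -/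
/-!
Call a pair of items discordant when the rankings `p` and `q` order it differently. A boost by
`α ≥ 0` can only lift a `g`-item over a non-`g` item that was at most `α` above it, so every
discordant pair is a matched pair, and the hypothesis says that `q` puts its more valuable item
first. While `p ≠ q`, some discordant pair is adjacent in `p`; swapping it in `p` removes exactly
that pair from the discordant set and strictly raises the value, since the larger weight moves to
the more valuable item. Iterating turns `p` into `q`.
-/

open Finset

lemma Fin.lt_of_swap_lt_swap {n : ℕ} {a b x y : Fin n} (hab : (a : ℕ) = b + 1)
    (h : Equiv.swap a b x < Equiv.swap a b y) (hxy : ¬(x = a ∧ y = b)) : x < y := by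
  simp only [Equiv.swap_apply_def] at h
  split_ifs at h <;> simp only [Fin.ext_iff, Fin.lt_def] at * <;> omega

section Rankings

variable {I : Type*} [Fintype I] {n : ℕ}

def discordantPairs (p q : I ≃ Fin n) : Finset (I × I) :=
  univ.filter fun x => q x.1 < q x.2 ∧ p x.2 < p x.1

lemma mem_discordantPairs {p q : I ≃ Fin n} {i i' : I} :
    (i, i') ∈ discordantPairs p q ↔ q i < q i' ∧ p i' < p i := by
  simp [discordantPairs]

lemma exists_discordant_adjacent_of_ne {p q : I ≃ Fin n} (hpq : p ≠ q) :
    ∃ i i', (i, i') ∈ discordantPairs p q ∧ (p i : ℕ) = p i' + 1 := by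
  have hσ : ¬StrictMono (p.symm.trans q) := fun h =>
    hpq (Equiv.ext fun i => by simpa using (congrFun h.eq_id (p i)).symm)
  obtain _ | m := n
  · exact absurd (fun _ _ h => (Fin.elim0 ‹_›)) hσ
  obtain ⟨k, hk⟩ : ∃ k : Fin m, q (p.symm k.succ) ≤ q (p.symm k.castSucc) := by
    simpa [Fin.strictMono_iff_lt_succ] using hσ
  refine ⟨p.symm k.succ, p.symm k.castSucc, mem_discordantPairs.2 ⟨hk.lt_of_ne ?_, ?_⟩, ?_⟩
  · simpa using (Fin.castSucc_lt_succ (i := k)).ne'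
  · simp
  · simp

lemma discordantPairs_swap_ssubset [DecidableEq I] {p q : I ≃ Fin n} {i i' : I}
    (hii' : (i, i') ∈ discordantPairs p q) (hadj : (p i : ℕ) = p i' + 1) :
    discordantPairs ((Equiv.swap i i').trans p) q ⊂ discordantPairs p q := by
  rw [mem_discordantPairs] at hii'
  have hp : ∀ x, (Equiv.swap i i').trans p x = Equiv.swap (p i) (p i') (p x) := fun x => by
    simp [Equiv.swap_apply_def, p.injective.eq_iff]; split_ifs <;> rfl
  refine ssubset_iff_of_subset ?_ |>.2 ⟨(i, i'), ?_, ?_⟩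
  · rintro ⟨x, y⟩ hxy
    rw [mem_discordantPairs, hp, hp] at *
    refine ⟨hxy.1, Fin.lt_of_swap_lt_swap hadj hxy.2 ?_⟩
    rintro ⟨hy, hx⟩
    rw [p.injective hy, p.injective hx] at hxy
    exact hxy.1.asymm hii'.1
  · exact mem_discordantPairs.2 hii'
  · rw [mem_discordantPairs]
    simp [hii'.2.le]

lemma sum_swap_trans_mul {R : Type*} [CommRing R] [DecidableEq I] (w : Fin n → R) (v : I → R)
    (p : I ≃ Fin n) {i i' : I} (hii' : i ≠ i') :
    ∑ x, w ((Equiv.swap i i').trans p x) * v x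
      = ∑ x, w (p x) * v x + (w (p i') - w (p i)) * (v i - v i') := by
  rw [← sub_eq_iff_eq_add', ← sum_sub_distrib,
    sum_eq_add_of_mem i i' (mem_univ _) (mem_univ _) hii' fun x _ hx => ?_]
  · simp [Equiv.swap_apply_left, Equiv.swap_apply_right]; ring
  · simp [Equiv.swap_apply_of_ne_of_ne hx.1 hx.2]

section Ordered

variable {R : Type*} [CommRing R] [LinearOrder R] [IsStrictOrderedRing R]
  {w : Fin n → R} {v : I → R} {q : I ≃ Fin n}

lemma sum_mul_lt_sum_swap_trans [DecidableEq I] (hw : StrictAnti w) {p : I ≃ Fin n} {i i' : I}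
    (hii' : (i, i') ∈ discordantPairs p q) (hv : v i' < v i) :
    ∑ x, w (p x) * v x < ∑ x, w ((Equiv.swap i i').trans p x) * v x := by
  rw [mem_discordantPairs] at hii'
  rw [sum_swap_trans_mul w v p fun h => hii'.1.ne (congrArg q h)]
  exact lt_add_of_pos_right _ (mul_pos (sub_pos.2 (hw hii'.2)) (sub_pos.2 hv))

theorem sum_mul_le_of_forall_discordantPairs {p : I ≃ Fin n} (hw : StrictAnti w)
    (hv : ∀ x ∈ discordantPairs p q, v x.2 < v x.1) :
    ∑ x, w (p x) * v x ≤ ∑ x, w (q x) * v x := by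
  classical
  by_cases hpq : p = q
  · rw [hpq]
  obtain ⟨i, i', hii', hadj⟩ := exists_discordant_adjacent_of_ne hpq
  have hsub := discordantPairs_swap_ssubset hii' hadj
  exact (sum_mul_lt_sum_swap_trans hw hii' (hv _ hii')).le.trans
    (sum_mul_le_of_forall_discordantPairs (p := (Equiv.swap i i').trans p) hw
      fun x hx => hv x (hsub.subset hx))
termination_by (discordantPairs p q).card
decreasing_by exact card_lt_card hsub

theorem sum_mul_lt_of_forall_discordantPairs {p : I ≃ Fin n} (hw : StrictAnti w)
    (hv : ∀ x ∈ discordantPairs p q, v x.2 < v x.1) (hD : (discordantPairs p q).Nonempty) :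
    ∑ x, w (p x) * v x < ∑ x, w (q x) * v x := by
  classical
  have hpq : p ≠ q := by
    rintro rfl
    obtain ⟨⟨i, i'⟩, hii'⟩ := hD
    exact (mem_discordantPairs.1 hii').1.asymm (mem_discordantPairs.1 hii').2
  obtain ⟨i, i', hii', hadj⟩ := exists_discordant_adjacent_of_ne hpq
  have hsub := discordantPairs_swap_ssubset hii' hadj
  exact (sum_mul_lt_sum_swap_trans hw hii' (hv _ hii')).trans_le
    (sum_mul_le_of_forall_discordantPairs (p := (Equiv.swap i i').trans p) hw
      fun x hx => hv x (hsub.subset hx))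

end Ordered

end Rankings

lemma matched_pair_of_boost_reverses {I : Type*} {s st : I → ℝ} {g : I → Bool} {α : ℝ}
    (hα : 0 ≤ α) (hst : ∀ i, st i = s i + α * (if g i then 1 else 0)) {i i' : I}
    (hs : s i < s i') (hst' : st i' < st i) :
    g i = true ∧ g i' = false ∧ s i' - s i ≤ α := by
  rw [hst, hst] at hst'
  cases hi : g i <;> cases hi' : g i' <;> simp only [hi, hi'] at hst' <;> norm_num at hst' ⊢ <;>
    linarith

theorem matched_pair_boost_improves_value_general {I : Type*} [Fintype I] {n : ℕ}
    (s v : I → ℝ) (g : I → Bool) (α : ℝ) (hα : 0 < α)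
    (st : I → ℝ) (hst : ∀ i, st i = s i + α * (if g i then 1 else 0))
    (w : Fin n → ℝ) (hw : StrictAnti w)
    (p q : I ≃ Fin n)
    (hp : ∀ i i' : I, s i' < s i ↔ p i < p i')
    (hq : ∀ i i' : I, st i' < st i ↔ q i < q i')
    (hv : ∀ ig ing : I, g ig = true → g ing = false →
      0 ≤ s ing - s ig → s ing - s ig ≤ α → v ing < v ig)
    (hex : ∃ i i' : I, s i < s i' ∧ st i' < st i) :
    (∑ i, w (p i) * v i) < (∑ i, w (q i) * v i) := by
  have reversed_iff {i i' : I} :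
      (i, i') ∈ discordantPairs p q ↔ s i < s i' ∧ st i' < st i := by
    rw [mem_discordantPairs, ← hq, ← hp, and_comm]
  refine sum_mul_lt_of_forall_discordantPairs hw (fun ⟨i, i'⟩ hii' => ?_) ?_
  · obtain ⟨hs, hst'⟩ := reversed_iff.1 hii'
    obtain ⟨hgi, hgi', hle⟩ := matched_pair_of_boost_reverses hα.le hst hs hst'
    exact hv i i' hgi hgi' (sub_nonneg.2 hs.le) hle
  · obtain ⟨i, i', hex⟩ := hex
    exact ⟨(i, i'), reversed_iff.2 hex⟩

/-- Deterministic matched pair calibration marginal outcome test: if every matched pair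
`(i_g, i_{¬g})` with `0 ≤ s i_{¬g} - s i_g ≤ α` satisfies `v i_g > v i_{¬g}`, and at least
one pair is misranked by the boost, then the boosted ranking has strictly greater value. -/
theorem matched_pair_boost_improves_value {I : Type*} [Fintype I] {n : ℕ}
    (hn : Fintype.card I = n)
    (s v : I → ℝ) (hs : Function.Injective s) (g : I → Bool) (α : ℝ) (hα : 0 < α)
    (st : I → ℝ) (hst : ∀ i, st i = s i + α * (if g i then 1 else 0))
    (hst_inj : Function.Injective st)
    (w : Fin n → ℝ) (hw : StrictAnti w)
    (p q : I ≃ Fin n)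
    (hp : ∀ i i' : I, s i' < s i ↔ p i < p i')
    (hq : ∀ i i' : I, st i' < st i ↔ q i < q i')
    (hv : ∀ ig ing : I, g ig = true → g ing = false →
      0 ≤ s ing - s ig → s ing - s ig ≤ α → v ing < v ig)
    (hex : ∃ i i' : I, s i < s i' ∧ st i' < st i) :
    (∑ i, w (p i) * v i) < (∑ i, w (q i) * v i) :=
  matched_pair_boost_improves_value_general s v g α hα st hst w hw p q hp hq hv hex
end

section
/- Under a group boost s̃(i) = s(i) + α·𝟙[g(i)] with s and s̃ injective, the position of each item under s̃ differs from its position under s by at most the number of items of the opposite group whose score lies within distance α of its own score. Precisely, for any item i, |rank_{s̃}(i) − rank_s(i)| ≤ |{i' : g(i') ≠ g(i) and |s(i') − s(i)| ≤ α}|. -/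
/-!
Boosting one group by `α` changes the relative order of two items only if they lie in different
groups and their original scores differ by at most `α`. The items above `i` under one score but
not under the other are exactly those whose order relative to `i` flips, so each of the two
rank counts exceeds the other by at most the number of such items.
-/

open Finset

theorem Finset.abs_card_filter_sub_card_filter_le {ι : Type*} (s : Finset ι)
    {p q r : ι → Prop} [DecidablePred p] [DecidablePred q] [DecidablePred r]
    (h : ∀ x ∈ s, ¬(p x ↔ q x) → r x) :
    |(#(s.filter p) : ℤ) - #(s.filter q)| ≤ #(s.filter r) := by
  classical
  have sdiff_subset {p q : ι → Prop} [DecidablePred p] [DecidablePred q]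
      (h : ∀ x ∈ s, p x → ¬q x → r x) : s.filter p \ s.filter q ⊆ s.filter r := by
    intro x hx
    simp only [mem_sdiff, mem_filter, not_and] at hx ⊢
    exact ⟨hx.1.1, h x hx.1.1 hx.1.2 (hx.2 hx.1.1)⟩
  have hpq := card_le_card (sdiff_subset fun x hx hp hq => h x hx fun e => hq (e.1 hp))
  have hqp := card_le_card (sdiff_subset fun x hx hq hp => h x hx fun e => hp (e.2 hq))
  have := card_le_card_sdiff_add_card (s := s.filter p) (t := s.filter q)
  have := card_le_card_sdiff_add_card (s := s.filter q) (t := s.filter p)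
  rw [abs_le]
  constructor <;> omega

theorem ne_and_abs_sub_le_of_boost_flips_lt {α x y : ℝ} (hα : 0 < α) {a b : Bool}
    (h : ¬(x < y ↔ x + α * (if a then 1 else 0) < y + α * (if b then 1 else 0))) :
    b ≠ a ∧ |y - x| ≤ α := by
  obtain rfl | hba := eq_or_ne b a
  · exact absurd (add_lt_add_iff_right _).symm h
  refine ⟨hba, abs_le.2 ?_⟩
  cases a <;> cases b <;> simp only [ne_eq, not_true_eq_false] at hba <;>
    simp only [Bool.false_eq_true, ↓reduceIte, mul_zero, add_zero, mul_one] at h <;>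
    by_cases hxy : x < y <;> simp only [hxy, true_iff, false_iff, not_lt] at h <;>
    constructor <;> linarith

theorem boost_rank_shift_bound_general {I : Type*} [Fintype I]
    (s : I → ℝ) (g : I → Bool) (α : ℝ) (hα : 0 < α)
    (st : I → ℝ) (hst : ∀ i, st i = s i + α * (if g i then 1 else 0)) (i : I) :
    |((Finset.univ.filter (fun i' => st i < st i')).card : ℤ)
        - ((Finset.univ.filter (fun i' => s i < s i')).card : ℤ)|
      ≤ ((Finset.univ.filter (fun i' => g i' ≠ g i ∧ |s i' - s i| ≤ α)).card : ℤ) := by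
  refine univ.abs_card_filter_sub_card_filter_le fun j _ hflip => ?_
  rw [hst, hst] at hflip
  exact ne_and_abs_sub_le_of_boost_flips_lt hα fun h => hflip h.symm

/-- The position of an item changes under the group boost by at most the number of items of
the opposite group whose score lies within `α` of its own score. -/
theorem boost_rank_shift_bound {I : Type*} [Fintype I] [DecidableEq I]
    (s : I → ℝ) (hs : Function.Injective s) (g : I → Bool) (α : ℝ) (hα : 0 < α)
    (st : I → ℝ) (hst : ∀ i, st i = s i + α * (if g i then 1 else 0))
    (hst_inj : Function.Injective st) (i : I) :
    |((Finset.univ.filter (fun i' => st i < st i')).card : ℤ)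
        - ((Finset.univ.filter (fun i' => s i < s i')).card : ℤ)|
      ≤ ((Finset.univ.filter (fun i' => g i' ≠ g i ∧ |s i' - s i| ≤ α)).card : ℤ) :=
  boost_rank_shift_bound_general s g α hα st hst i
end

section
/- Let r₀, r₁, …, r_K be a sequence of rankings (bijections I ≃ Fin n) such that each r_{k+1} differs from r_k by transposing the positions of one group-g item i_g[k] and one non-group-g item i_{¬g}[k], where i_{¬g}[k] occupies the higher position in r_k. If the position weights w are strictly decreasing and v(i_g[k]) > v(i_{¬g}[k]) for every k, then V(r_K) − V(r_0) = ∑_{k=1}^{K} (w_k⁺ − w_k⁻)·(v(i_g[k]) − v(i_{¬g}[k])) > 0, where w_k⁺ and w_k⁻ are the weights of the higher and lower positions involved in the k-th swap. -/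
/-!
Composing a ranking with the transposition of `a` and `b` only exchanges the weights of `a` and
`b`, so the value changes by `(w⁺ - w⁻) * (v a - v b)`. Summing these changes telescopes to
`V(r_K) - V(r_0)`, and every summand is a product of two positive factors.
-/

open Finset

theorem sum_comp_swap_mul_sub_sum_mul {I R : Type*} [Fintype I] [DecidableEq I] [CommRing R]
    (f v : I → R) (a b : I) :
    ∑ x, f (Equiv.swap a b x) * v x - ∑ x, f x * v x = (f b - f a) * (v a - v b) := by
  rcases eq_or_ne a b with rfl | hab
  · simp
  rw [← sum_sub_distrib, Fintype.sum_eq_add a b hab]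
  · simp only [Equiv.swap_apply_left, Equiv.swap_apply_right]
    ring
  · rintro x ⟨hxa, hxb⟩
    rw [Equiv.swap_apply_of_ne_of_ne hxa hxb, sub_self]

theorem Fin.sum_univ_sub {R : Type*} [AddCommGroup R] (F : ℕ → R) (K : ℕ) :
    ∑ k : Fin K, (F (k + 1) - F k) = F K - F 0 := by
  rw [Fin.sum_univ_eq_sum_range (fun k => F (k + 1) - F k), sum_range_sub]

theorem swap_sequence_value_positive_general {I : Type*} [Fintype I] [DecidableEq I] {n K : ℕ}
    (hK : 0 < K) (w : Fin n → ℝ) (hw : StrictAnti w) (v : I → ℝ)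
    (r : ℕ → I ≃ Fin n) (ig ing : Fin K → I)
    (hswap : ∀ k : Fin K,
      r ((k : ℕ) + 1) = (Equiv.swap (ig k) (ing k)).trans (r (k : ℕ)))
    (horder : ∀ k : Fin K, r (k : ℕ) (ing k) < r (k : ℕ) (ig k))
    (hval : ∀ k : Fin K, v (ing k) < v (ig k)) :
    (∑ a, w (r K a) * v a) - (∑ a, w (r 0 a) * v a)
        = ∑ k : Fin K,
            (w (r (k : ℕ) (ing k)) - w (r (k : ℕ) (ig k))) * (v (ig k) - v (ing k)) ∧
      0 < (∑ a, w (r K a) * v a) - (∑ a, w (r 0 a) * v a) := by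
  have htelescope : (∑ a, w (r K a) * v a) - (∑ a, w (r 0 a) * v a)
      = ∑ k : Fin K,
          (w (r (k : ℕ) (ing k)) - w (r (k : ℕ) (ig k))) * (v (ig k) - v (ing k)) := by
    rw [← Fin.sum_univ_sub (fun m => ∑ a, w (r m a) * v a)]
    refine sum_congr rfl fun k _ => ?_
    simp only [hswap k, Equiv.trans_apply]
    exact sum_comp_swap_mul_sub_sum_mul (fun x => w (r k x)) v (ig k) (ing k)
  refine ⟨htelescope, htelescope ▸ sum_pos (fun k _ => ?_) (univ_nonempty_iff.mpr ⟨⟨0, hK⟩⟩)⟩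
  exact mul_pos (sub_pos.mpr (hw (horder k))) (sub_pos.mpr (hval k))

/-- For a sequence of rankings in which each step swaps a group-`g` item with a higher-ranked
non-group item of strictly smaller value, the total value change telescopes into a sum of
strictly positive swap contributions. -/
theorem swap_sequence_value_positive {I : Type*} [Fintype I] [DecidableEq I] {n K : ℕ}
    (hK : 0 < K) (w : Fin n → ℝ) (hw : StrictAnti w) (v : I → ℝ) (g : I → Bool)
    (r : ℕ → I ≃ Fin n) (ig ing : Fin K → I)
    (hgig : ∀ k : Fin K, g (ig k) = true) (hging : ∀ k : Fin K, g (ing k) = false)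
    (hswap : ∀ k : Fin K,
      r ((k : ℕ) + 1) = (Equiv.swap (ig k) (ing k)).trans (r (k : ℕ)))
    (horder : ∀ k : Fin K, r (k : ℕ) (ing k) < r (k : ℕ) (ig k))
    (hval : ∀ k : Fin K, v (ing k) < v (ig k)) :
    (∑ a, w (r K a) * v a) - (∑ a, w (r 0 a) * v a)
        = ∑ k : Fin K,
            (w (r (k : ℕ) (ing k)) - w (r (k : ℕ) (ig k))) * (v (ig k) - v (ing k)) ∧
      0 < (∑ a, w (r K a) * v a) - (∑ a, w (r 0 a) * v a) :=
  swap_sequence_value_positive_general hK w hw v r ig ing hswap horder hval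
end
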